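/- arXiv:2505.13980 — 7 statements merged into one kernel-verified Lean document; each statement's English description precedes it below -/
import Mathlib

section
/- Let p, q ∈ ℝ[s] with q ≠ 0, deg p ≤ deg q, and q(z) ≠ 0 for every z ∈ ℂ with Re z ≥ 0 (evaluating q at complex points through the embedding ℝ ↪ ℂ). Then the function z ↦ p(z)/q(z) is bounded on the open right half-plane {z ∈ ℂ | Re z > 0}, and sup_{Re z > 0} |p(z)/q(z)| = sup_{ω ∈ ℝ} |p(iω)/q(iω)|. -/
/-!
A proper rational function whose denominator has no zeros in the closed right half-plane is
continuous there and has a finite limit at infinity, hence is bounded. The Phragmén–Lindelöf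
principle then bounds it on the half-plane by its supremum on the imaginary axis, and conversely
the axis lies in the closure of the open half-plane, so by continuity the two suprema agree.
-/

open Polynomial Filter Bornology Set Topology Complex

namespace Polynomial

variable {R 𝕜 : Type*} [NormedField 𝕜]

theorem tendsto_aeval_div_pow_cobounded [CommSemiring R] [Algebra R 𝕜] (p : R[X]) {n : ℕ}
    (hp : p.natDegree ≤ n) :
    Tendsto (fun z : 𝕜 => aeval z p / z ^ n) (cobounded 𝕜) (𝓝 (algebraMap R 𝕜 (p.coeff n))) := by
  -- `p(z) / zⁿ` is the reflected polynomial evaluated at `z⁻¹`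
  have hlim : Tendsto (fun z : 𝕜 => aeval z⁻¹ (reflect n p)) (cobounded 𝕜)
      (𝓝 (aeval 0 (reflect n p))) :=
    ((reflect n p).continuous_aeval.tendsto 0).comp tendsto_inv₀_cobounded
  rw [← coeff_zero_eq_aeval_zero', coeff_reflect, revAt_le (Nat.zero_le n), Nat.sub_zero] at hlim
  refine hlim.congr' ?_
  filter_upwards [eventually_ne_cobounded 0] with z hz
  have : Invertible z := invertibleOfNonzero hz
  rw [eq_div_iff (pow_ne_zero n hz), aeval_def, aeval_def, ← invOf_eq_inv,
    eval₂_reflect_mul_pow _ _ _ _ hp]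

theorem tendsto_aeval_div_aeval_cobounded {K : Type*} [Field K] [Algebra K 𝕜] {p q : K[X]}
    (hq : q ≠ 0) (hdeg : p.degree ≤ q.degree) :
    Tendsto (fun z : 𝕜 => aeval z p / aeval z q) (cobounded 𝕜)
      (𝓝 (algebraMap K 𝕜 (p.coeff q.natDegree) / algebraMap K 𝕜 q.leadingCoeff)) := by
  have hlc : algebraMap K 𝕜 q.leadingCoeff ≠ 0 := by simpa using hq
  refine ((tendsto_aeval_div_pow_cobounded p (natDegree_le_natDegree hdeg)).div
    (tendsto_aeval_div_pow_cobounded q le_rfl) hlc).congr' ?_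
  filter_upwards [eventually_ne_cobounded 0] with z hz
  exact div_div_div_cancel_right₀ (pow_ne_zero _ hz) _ _

end Polynomial

theorem IsClosed.isBounded_image_of_tendsto_cobounded {α β : Type*} [PseudoMetricSpace α]
    [ProperSpace α] [PseudoMetricSpace β] {f : α → β} {s : Set α} {b : β} (hs : IsClosed s)
    (hf : ContinuousOn f s) (hlim : Tendsto f (cobounded α) (𝓝 b)) : IsBounded (f '' s) := by
  obtain ⟨t, ht, hbt⟩ := Metric.exists_isBounded_image_of_tendsto hlim
  have hK : IsCompact (s ∩ closure tᶜ) :=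
    Metric.isCompact_of_isClosed_isBounded (hs.inter isClosed_closure)
      ((isBounded_compl_iff.mpr ht).closure.subset inter_subset_right)
  refine (((hK.image_of_continuousOn (hf.mono inter_subset_left)).isBounded).union hbt).subset ?_
  rintro _ ⟨z, hz, rfl⟩
  by_cases hzt : z ∈ t
  · exact Or.inr (mem_image_of_mem f hzt)
  · exact Or.inl (mem_image_of_mem f ⟨hz, subset_closure hzt⟩)

theorem ContinuousOn.le_csSup_image_of_mem_closure {α : Type*} [TopologicalSpace α] {f : α → ℝ}
    {s : Set α} (hf : ContinuousOn f (closure s)) (hb : BddAbove (f '' s)) {x : α}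
    (hx : x ∈ closure s) : f x ≤ sSup (f '' s) :=
  closure_minimal (fun _ hy => le_csSup hb hy) isClosed_Iic (hf.image_closure (mem_image_of_mem f hx))

namespace Complex

variable {E : Type*} [NormedAddCommGroup E] [NormedSpace ℂ E] {f : ℂ → E}

theorem norm_le_of_bddAbove_rightHalfPlane (hd : DiffContOnCl ℂ f {z | 0 < z.re})
    (hb : BddAbove ((‖f ·‖) '' {z | 0 < z.re})) {C : ℝ} (him : ∀ ω : ℝ, ‖f (ω * I)‖ ≤ C)
    {z : ℂ} (hz : 0 ≤ z.re) : ‖f z‖ ≤ C := by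
  obtain ⟨M, hM⟩ := hb
  have hM' : ∀ z : ℂ, 0 < z.re → ‖f z‖ ≤ M := fun z hz => hM (mem_image_of_mem _ hz)
  refine PhragmenLindelof.right_half_plane_of_bounded_on_real hd ⟨1, one_lt_two, 0, ?_⟩ ?_ him hz
  · refine Asymptotics.IsBigO.of_bound M (eventually_inf_principal.2 (.of_forall fun z hz => ?_))
    simpa using hM' z hz
  · refine ⟨M, eventually_map.2 ?_⟩
    filter_upwards [eventually_gt_atTop 0] with x hx
    exact hM' x (by simpa using hx)

theorem sSup_norm_rightHalfPlane_eq_iSup_imagAxis (hd : DiffContOnCl ℂ f {z | 0 < z.re})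
    (hb : BddAbove ((‖f ·‖) '' {z | 0 < z.re})) :
    sSup ((‖f ·‖) '' {z | 0 < z.re}) = ⨆ ω : ℝ, ‖f (ω * I)‖ := by
  have haxis : ∀ ω : ℝ, ‖f (ω * I)‖ ≤ sSup ((‖f ·‖) '' {z | 0 < z.re}) := fun ω =>
    hd.continuousOn.norm.le_csSup_image_of_mem_closure hb (by simp)
  refine le_antisymm (csSup_le ⟨_, mem_image_of_mem _ (show (0 : ℝ) < (1 : ℂ).re by simp)⟩ ?_)
    (ciSup_le haxis)
  rintro _ ⟨z, hz, rfl⟩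
  exact norm_le_of_bddAbove_rightHalfPlane hd hb
    (le_ciSup (bddAbove_def.2 ⟨_, forall_mem_range.2 haxis⟩)) (le_of_lt hz)

end Complex

theorem stmt0_general (p q : Polynomial ℝ) (hdeg : p.degree ≤ q.degree)
    (hstable : ∀ z : ℂ, 0 ≤ z.re → (Polynomial.aeval z) q ≠ 0) :
    BddAbove ((fun z : ℂ =>
        ‖(Polynomial.aeval z) p / (Polynomial.aeval z) q‖) '' {z : ℂ | 0 < z.re}) ∧
    sSup ((fun z : ℂ =>
        ‖(Polynomial.aeval z) p / (Polynomial.aeval z) q‖) '' {z : ℂ | 0 < z.re}) =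
      ⨆ ω : ℝ, ‖(Polynomial.aeval ((ω : ℂ) * Complex.I)) p /
        (Polynomial.aeval ((ω : ℂ) * Complex.I)) q‖ := by
  set f : ℂ → ℂ := fun z => aeval z p / aeval z q
  have hq : q ≠ 0 := by
    rintro rfl
    exact hstable 0 le_rfl (map_zero _)
  have hcont : ContinuousOn f {z | 0 ≤ z.re} :=
    p.continuous_aeval.continuousOn.div q.continuous_aeval.continuousOn hstable
  have hd : DiffContOnCl ℂ f {z | 0 < z.re} :=
    ⟨p.differentiableOn_aeval.div q.differentiableOn_aeval fun z hz => hstable z (le_of_lt hz),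
      by simpa using hcont⟩
  obtain ⟨M, hM⟩ := isBounded_iff_forall_norm_le.1
    ((isClosed_le continuous_const continuous_re).isBounded_image_of_tendsto_cobounded hcont
      (tendsto_aeval_div_aeval_cobounded hq hdeg))
  have hb : BddAbove ((‖f ·‖) '' {z | 0 < z.re}) :=
    ⟨M, forall_mem_image.2 fun z hz => hM _ (mem_image_of_mem f (le_of_lt hz : 0 ≤ z.re))⟩
  exact ⟨hb, sSup_norm_rightHalfPlane_eq_iSup_imagAxis hd hb⟩

/-- For a proper and stable real rational function `p/q` (i.e. `q ≠ 0`,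
`deg p ≤ deg q`, and `q` has no complex root with nonnegative real part), the function
`z ↦ p(z)/q(z)` is bounded on the open right half-plane, and its supremum there equals
the supremum of `|p(iω)/q(iω)|` over `ω ∈ ℝ`. -/
theorem stmt0 (p q : Polynomial ℝ) (hq : q ≠ 0) (hdeg : p.degree ≤ q.degree)
    (hstable : ∀ z : ℂ, 0 ≤ z.re → (Polynomial.aeval z) q ≠ 0) :
    BddAbove ((fun z : ℂ =>
        ‖(Polynomial.aeval z) p / (Polynomial.aeval z) q‖) '' {z : ℂ | 0 < z.re}) ∧
    sSup ((fun z : ℂ =>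
        ‖(Polynomial.aeval z) p / (Polynomial.aeval z) q‖) '' {z : ℂ | 0 < z.re}) =
      ⨆ ω : ℝ, ‖(Polynomial.aeval ((ω : ℂ) * Complex.I)) p /
        (Polynomial.aeval ((ω : ℂ) * Complex.I)) q‖ :=
  stmt0_general p q hdeg hstable
end

section
/- Let G be a u×v matrix whose entries are rational functions p_{jk}/q_{jk} with p_{jk}, q_{jk} ∈ ℝ[s], deg p_{jk} ≤ deg q_{jk}, and q_{jk}(z) ≠ 0 for every z ∈ ℂ with Re z ≥ 0. Then sup_{Re z > 0} ‖G(z)‖ = sup_{ω ∈ ℝ} ‖G(iω)‖, where G(z) denotes the complex matrix obtained by entrywise evaluation at z. -/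
open Polynomial Filter Bornology
open scoped Matrix.Norms.L2Operator

/-! A proper rational function without poles in the closed right half-plane is bounded there:
it is bounded near infinity because `deg p ≤ deg q`, and on compact sets by continuity. Hence
`G` is holomorphic on the open half-plane, continuous up to the imaginary axis and bounded, and
the Phragmén–Lindelöf principle for the right half-plane bounds `‖G‖` by its supremum on the
imaginary axis. The reverse inequality holds because the imaginary axis lies in the closure of
the open half-plane. -/

theorem EuclideanSpace.norm_le_sum_norm {𝕜 ι : Type*} [RCLike 𝕜] [Fintype ι]
    (x : EuclideanSpace 𝕜 ι) : ‖x‖ ≤ ∑ i, ‖x i‖ := by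
  rw [EuclideanSpace.norm_eq]
  calc √(∑ i, ‖x i‖ ^ 2) ≤ √((∑ i, ‖x i‖) ^ 2) :=
        Real.sqrt_le_sqrt (Finset.sum_sq_le_sq_sum_of_nonneg fun _ _ => norm_nonneg _)
    _ = ∑ i, ‖x i‖ := Real.sqrt_sq (by positivity)

theorem Matrix.l2_opNorm_le_sum_norm {𝕜 m n : Type*} [RCLike 𝕜] [Fintype m] [Fintype n]
    [DecidableEq n] (A : Matrix m n 𝕜) : ‖A‖ ≤ ∑ i, ∑ j, ‖A i j‖ := by
  rw [Matrix.l2_opNorm_def]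
  refine ContinuousLinearMap.opNorm_le_bound _ (by positivity) fun x => ?_
  refine (EuclideanSpace.norm_le_sum_norm _).trans ?_
  rw [Finset.sum_mul]
  gcongr with i
  refine (norm_sum_le _ _).trans ?_
  rw [Finset.sum_mul]
  gcongr with j
  rw [norm_mul]
  gcongr
  exact PiLp.norm_apply_le x j

theorem Matrix.differentiableAt_of_forall_entry {𝕜 m n : Type*} [RCLike 𝕜] [Fintype m]
    [Fintype n] [DecidableEq m] [DecidableEq n] {f : 𝕜 → Matrix m n 𝕜} {z : 𝕜}
    (hf : ∀ i j, DifferentiableAt 𝕜 (fun w => f w i j) z) : DifferentiableAt 𝕜 f z := by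
  have hsum : f = fun w => ∑ i, ∑ j, f w i j • Matrix.single i j (1 : 𝕜) := by
    funext w
    conv_lhs => rw [Matrix.matrix_eq_sum_single (f w)]
    simp only [Matrix.smul_single, smul_eq_mul, mul_one]
  rw [hsum]
  exact .fun_sum fun i _ => .fun_sum fun j _ => (hf i j).smul_const _

theorem exists_norm_le_of_continuousOn_of_eventually_cobounded {α E : Type*}
    [PseudoMetricSpace α] [ProperSpace α] [SeminormedAddGroup E] {f : α → E} {s : Set α}
    (hs : IsClosed s) (hf : ContinuousOn f s) {c : ℝ} (hc : ∀ᶠ x in cobounded α, ‖f x‖ ≤ c) :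
    ∃ C, ∀ x ∈ s, ‖f x‖ ≤ C := by
  rw [Metric.cobounded_eq_cocompact, hasBasis_cocompact.eventually_iff] at hc
  obtain ⟨K, hK, hKc⟩ := hc
  obtain ⟨C, hC⟩ :=
    (hK.inter_right hs).exists_bound_of_continuousOn (hf.mono Set.inter_subset_right)
  refine ⟨max C c, fun x hx => ?_⟩
  by_cases hxK : x ∈ K
  · exact (hC x ⟨hxK, hx⟩).trans (le_max_left _ _)
  · exact (hKc hxK).trans (le_max_right _ _)

theorem Polynomial.exists_norm_eval_div_eval_le {𝕜 : Type*} [NormedField 𝕜]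
    [ProperSpace 𝕜] {P Q : 𝕜[X]} (hdeg : P.degree ≤ Q.degree) {s : Set 𝕜} (hs : IsClosed s)
    (hQ : ∀ z ∈ s, Q.eval z ≠ 0) : ∃ C, ∀ z ∈ s, ‖P.eval z / Q.eval z‖ ≤ C := by
  obtain ⟨c, hc, hPQ⟩ := (isBigO_cobounded_of_degree_le hdeg).exists_nonneg
  refine exists_norm_le_of_continuousOn_of_eventually_cobounded hs
    (P.continuousOn.div Q.continuousOn hQ) (c := c) ?_
  filter_upwards [hPQ.bound] with z hz
  rw [norm_div]
  exact div_le_of_le_mul₀ (norm_nonneg _) hc hz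

section RightHalfPlane

variable {E : Type*} [NormedAddCommGroup E] [NormedSpace ℂ E] {f : ℂ → E}

theorem norm_le_iSup_norm_imagAxis_of_bounded (hd : DiffContOnCl ℂ f {z | 0 < z.re}) {B : ℝ}
    (hB : ∀ z : ℂ, 0 ≤ z.re → ‖f z‖ ≤ B) {z : ℂ} (hz : 0 ≤ z.re) :
    ‖f z‖ ≤ ⨆ ω : ℝ, ‖f (ω * Complex.I)‖ := by
  have him : BddAbove (Set.range fun ω : ℝ => ‖f (ω * Complex.I)‖) :=
    ⟨B, Set.forall_mem_range.2 fun ω => hB _ (by simp)⟩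
  refine PhragmenLindelof.right_half_plane_of_bounded_on_real hd ⟨1, one_lt_two, 0, ?_⟩
    ⟨B, eventually_map.2 (eventually_ge_atTop 0 |>.mono fun x hx => hB x (by simpa))⟩
    (le_ciSup him) hz
  refine .of_bound B (eventually_inf_principal.2 (.of_forall fun w hw => ?_))
  simpa using hB w (le_of_lt hw)

theorem sSup_norm_rightHalfPlane_eq_iSup_norm_imagAxis (hd : DiffContOnCl ℂ f {z | 0 < z.re})
    {B : ℝ} (hB : ∀ z : ℂ, 0 ≤ z.re → ‖f z‖ ≤ B) :
    sSup ((fun z => ‖f z‖) '' {z | 0 < z.re}) = ⨆ ω : ℝ, ‖f (ω * Complex.I)‖ := by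
  set S := (fun z => ‖f z‖) '' {z : ℂ | 0 < z.re}
  have hne : S.Nonempty := ⟨_, 1, by simp, rfl⟩
  have hbdd : BddAbove S := ⟨B, Set.forall_mem_image.2 fun z hz => hB z (le_of_lt hz)⟩
  refine le_antisymm (csSup_le hne (Set.forall_mem_image.2 fun z hz =>
    norm_le_iSup_norm_imagAxis_of_bounded hd hB (le_of_lt hz))) (ciSup_le fun ω => ?_)
  have hcont : ContinuousOn (fun z => ‖f z‖) (closure {z : ℂ | 0 < z.re}) :=
    hd.continuousOn.norm
  have hmem : ‖f (ω * Complex.I)‖ ∈ closure S :=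
    hcont.image_closure ⟨_, by simp, rfl⟩
  exact (upperBounds_closure S ▸ (isLUB_csSup hne hbdd).1) hmem

end RightHalfPlane

/-- For a `u × v` matrix `G` of proper and stable real rational functions
`p j k / q j k`, the supremum of the L2 operator norm `‖G(z)‖` over the open right half-plane
equals the supremum of `‖G(iω)‖` over `ω ∈ ℝ`. -/
theorem stmt1 (u v : ℕ) (p q : Fin u → Fin v → Polynomial ℝ)
    (hdeg : ∀ j k, (p j k).degree ≤ (q j k).degree)
    (hstable : ∀ j k, ∀ z : ℂ, 0 ≤ z.re → (Polynomial.aeval z) (q j k) ≠ 0)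
    (G : ℂ → Matrix (Fin u) (Fin v) ℂ)
    (hG : ∀ z j k, G z j k = (Polynomial.aeval z) (p j k) / (Polynomial.aeval z) (q j k)) :
    sSup ((fun z : ℂ => ‖G z‖) '' {z : ℂ | 0 < z.re}) =
      ⨆ ω : ℝ, ‖G ((ω : ℂ) * Complex.I)‖ := by
  set P := fun j k => (p j k).map (algebraMap ℝ ℂ)
  set Q := fun j k => (q j k).map (algebraMap ℝ ℂ)
  have hGPQ : ∀ z j k, G z j k = (P j k).eval z / (Q j k).eval z := by
    simp [P, Q, hG, eval_map_algebraMap]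
  have hQ : ∀ j k, ∀ z ∈ {z : ℂ | 0 ≤ z.re}, (Q j k).eval z ≠ 0 := by
    simpa [Q, eval_map_algebraMap] using hstable
  have hdiff : ∀ z : ℂ, 0 ≤ z.re → DifferentiableAt ℂ G z := fun z hz =>
    Matrix.differentiableAt_of_forall_entry fun j k => by
      simp only [hGPQ]
      exact (P j k).differentiableAt.div (Q j k).differentiableAt (hQ j k z hz)
  have hd : DiffContOnCl ℂ G {z | 0 < z.re} :=
    ⟨fun z hz => (hdiff z (le_of_lt hz)).differentiableWithinAt, fun z hz =>
      (hdiff z (by simpa using hz)).continuousAt.continuousWithinAt⟩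
  choose C hC using fun j k => exists_norm_eval_div_eval_le (P := P j k) (Q := Q j k)
    (by simpa [P, Q] using hdeg j k) (isClosed_le continuous_const Complex.continuous_re) (hQ j k)
  refine sSup_norm_rightHalfPlane_eq_iSup_norm_imagAxis hd (B := ∑ j, ∑ k, C j k) fun z hz => ?_
  refine (Matrix.l2_opNorm_le_sum_norm _).trans ?_
  gcongr with j _ k _
  exact hGPQ z j k ▸ hC j k z hz
end

section
/- Let M be a complex u×v matrix and γ > 0 a real number. Then γ > ‖M‖ if and only if the v×v matrix γ² • 1_v − Mᴴ · M is positive definite. -/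
open Matrix
open scoped ComplexOrder
open scoped Matrix.Norms.L2Operator MatrixOrder

/-!
`γ² • 1 - Mᴴ * M` is `algebraMap ℝ _ γ² - a` in the C⋆-algebra of `v × v` matrices, with
`a = Mᴴ * M ≥ 0` and `‖a‖ = ‖M‖²` by the C⋆-identity; positive definiteness is strict positivity
there. For `a ≥ 0` the norm `‖a‖` is the top of the spectrum, so `r - a` is strictly positive
exactly when `‖a‖ < r`.
-/

namespace CStarAlgebra

variable {A : Type*} [CStarAlgebra A] [PartialOrder A] [StarOrderedRing A]

lemma isStrictlyPositive_algebraMap_sub_iff_norm_lt {a : A} (ha : 0 ≤ a) {r : ℝ} (hr : 0 < r) :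
    IsStrictlyPositive (algebraMap ℝ A r - a) ↔ ‖a‖ < r := by
  constructor
  · intro h
    obtain _ | _ := subsingleton_or_nontrivial A
    · simpa [Subsingleton.elim a 0] using hr
    have hmem : r - ‖a‖ ∈ spectrum ℝ (algebraMap ℝ A r - a) := by
      rw [← spectrum.singleton_sub_eq]
      exact Set.sub_mem_sub rfl (norm_mem_spectrum_of_nonneg ha)
    simpa using h.spectrum_pos hmem
  · intro h
    have hsplit : algebraMap ℝ A r - a =
        algebraMap ℝ A (r - ‖a‖) + (algebraMap ℝ A ‖a‖ - a) := by
      rw [map_sub]; abel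
    rw [hsplit]
    exact (isStrictlyPositive_algebraMap (sub_pos.2 h)).add_nonneg
      (sub_nonneg.2 (IsSelfAdjoint.of_nonneg ha).le_algebraMap_norm_self)

end CStarAlgebra

lemma Matrix.posDef_smul_one_sub_conjTranspose_mul_self_iff {m n : Type*} [Fintype m]
    [Fintype n] [DecidableEq n] (M : Matrix m n ℂ) {r : ℝ} (hr : 0 < r) :
    (r • (1 : Matrix n n ℂ) - Mᴴ * M).PosDef ↔ ‖M‖ ^ 2 < r := by
  rw [← isStrictlyPositive_iff_posDef, ← Algebra.algebraMap_eq_smul_one,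
    CStarAlgebra.isStrictlyPositive_algebraMap_sub_iff_norm_lt
      (posSemidef_conjTranspose_mul_self M).nonneg hr,
    l2_opNorm_conjTranspose_mul_self, sq]

/-- For a complex `u × v` matrix `M` and a real `γ > 0`, we have `γ > ‖M‖`
(L2 operator norm) if and only if `γ² • 1 − Mᴴ * M` is positive definite. -/
theorem stmt2 (u v : ℕ) (M : Matrix (Fin u) (Fin v) ℂ) (γ : ℝ) (hγ : 0 < γ) :
    γ > ‖M‖ ↔ (γ ^ 2 • (1 : Matrix (Fin v) (Fin v) ℂ) - Mᴴ * M).PosDef := by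
  rw [posDef_smul_one_sub_conjTranspose_mul_self_iff M (by positivity), gt_iff_lt,
    pow_lt_pow_iff_left₀ (norm_nonneg M) hγ.le two_ne_zero]
end

section
/- Let G be a u×v matrix whose entries are proper rational functions in RatFunc ℝ with no poles on the imaginary axis, let Gc : ℝ → (u×v complex matrices) be defined by entrywise evaluation at iω, and assume the set {‖Gc(ω)‖ : ω ∈ ℝ} is bounded above. Let D be a complex u×v matrix such that Gc(ω) → D as ω → +∞ and as ω → −∞. Then for every real γ > 0: γ > sup_{ω ∈ ℝ} ‖Gc(ω)‖ if and only if γ > ‖D‖ and det(γ² • 1_v − Gc(ω)ᴴ · Gc(ω)) ≠ 0 for all ω ∈ ℝ. -/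
open Matrix Polynomial
open scoped Matrix.Norms.L2Operator

/-!
For a complex matrix `A`, `Aᴴ * A` is a positive semidefinite element of the C⋆-algebra of square
matrices whose norm is `‖A‖²`, so `‖A‖²` is the largest point of its spectrum. Hence
`det (γ² • 1 - Aᴴ * A) = 0` forces `γ ≤ ‖A‖`, and it holds when `γ = ‖A‖ > 0`.

Along the imaginary axis `ω ↦ ‖Gc ω‖` is continuous with limit `‖D‖` at `±∞`. If `γ > ‖D‖` and the
determinant never vanishes, this function never takes the value `γ`, so by the intermediate value
theorem it stays below `γ`; its supremum is then either `‖D‖` or a maximum, and in both cases it is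
below `γ`.
-/

open Filter Topology
open scoped MatrixOrder ComplexOrder

namespace Matrix

variable {m n : Type*} [Fintype m] [Fintype n] [DecidableEq n]

theorem mem_spectrum_real_iff_det_eq_zero (B : Matrix n n ℂ) (r : ℝ) :
    r ∈ spectrum ℝ B ↔ (r • (1 : Matrix n n ℂ) - B).det = 0 := by
  rw [spectrum.mem_iff, Algebra.algebraMap_eq_smul_one, isUnit_iff_isUnit_det, isUnit_iff_ne_zero,
    not_not]

theorem le_l2_opNorm_of_det_eq_zero (A : Matrix m n ℂ) {γ : ℝ}
    (hdet : (γ ^ 2 • (1 : Matrix n n ℂ) - Aᴴ * A).det = 0) : γ ≤ ‖A‖ := by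
  have : Nonempty n := by
    by_contra h
    rw [not_nonempty_iff] at h
    simp at hdet
  have hγ := spectrum.norm_le_norm_of_mem ((mem_spectrum_real_iff_det_eq_zero _ _).mpr hdet)
  rw [l2_opNorm_conjTranspose_mul_self, Real.norm_of_nonneg (sq_nonneg γ)] at hγ
  nlinarith [norm_nonneg A]

theorem det_l2_opNorm_sq_sub_eq_zero (A : Matrix m n ℂ) (hA : A ≠ 0) :
    (‖A‖ ^ 2 • (1 : Matrix n n ℂ) - Aᴴ * A).det = 0 := by
  have : Nonempty n := by
    by_contra h
    exact hA (Matrix.ext fun _ k => (h ⟨k⟩).elim)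
  rw [← mem_spectrum_real_iff_det_eq_zero, sq, ← l2_opNorm_conjTranspose_mul_self]
  exact CStarAlgebra.norm_mem_spectrum_of_nonneg
    (nonneg_iff_posSemidef.mpr (posSemidef_conjTranspose_mul_self A))

end Matrix

theorem Continuous.forall_lt_of_forall_ne {X α : Type*} [TopologicalSpace X] [PreconnectedSpace X]
    [LinearOrder α] [TopologicalSpace α] [OrderClosedTopology α] {f : X → α} (hf : Continuous f)
    {c : α} (hne : ∀ x, f x ≠ c) {a : X} (ha : f a < c) (x : X) : f x < c := by
  by_contra! h
  obtain ⟨y, hy⟩ := intermediate_value_univ a x hf ⟨ha.le, h⟩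
  exact hne y hy

theorem Continuous.ciSup_lt_of_tendsto_cocompact {X α : Type*} [TopologicalSpace X] [Nonempty X]
    [ConditionallyCompleteLinearOrder α] [TopologicalSpace α] [OrderTopology α] {f : X → α}
    (hf : Continuous f) {L c : α} (hL : Tendsto f (cocompact X) (𝓝 L)) (hLc : L < c)
    (hfc : ∀ x, f x < c) : ⨆ x, f x < c := by
  by_cases h : ∀ x, f x ≤ L
  · exact (ciSup_le h).trans_lt hLc
  · push Not at h
    obtain ⟨x₀, hx₀⟩ := h
    obtain ⟨x, hx⟩ :=
      hf.exists_forall_ge' x₀ ((hL.eventually (gt_mem_nhds hx₀)).mono fun _ => le_of_lt)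
    exact (ciSup_le hx).trans_lt (hfc x)

theorem continuous_aeval_ofReal_mul_I_div {p q : ℝ[X]}
    (hq : ∀ ω : ℝ, aeval ((ω : ℂ) * Complex.I) q ≠ 0) :
    Continuous fun ω : ℝ => aeval ((ω : ℂ) * Complex.I) p / aeval ((ω : ℂ) * Complex.I) q := by
  have h : Continuous fun ω : ℝ => (ω : ℂ) * Complex.I := by fun_prop
  exact (p.continuous_aeval.comp h).div (q.continuous_aeval.comp h) hq

theorem stmt4_general (u v : ℕ) (G : Matrix (Fin u) (Fin v) (RatFunc ℝ))
    (hpoles : ∀ j k, ∀ ω : ℝ, (Polynomial.aeval ((ω : ℂ) * Complex.I)) (G j k).denom ≠ 0)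
    (Gc : ℝ → Matrix (Fin u) (Fin v) ℂ)
    (hGc : ∀ ω j k, Gc ω j k =
        (Polynomial.aeval ((ω : ℂ) * Complex.I)) (G j k).num /
        (Polynomial.aeval ((ω : ℂ) * Complex.I)) (G j k).denom)
    (hbdd : BddAbove (Set.range fun ω : ℝ => ‖Gc ω‖))
    (D : Matrix (Fin u) (Fin v) ℂ)
    (hDtop : Filter.Tendsto Gc Filter.atTop (nhds D))
    (hDbot : Filter.Tendsto Gc Filter.atBot (nhds D))
    (γ : ℝ) (hγ : 0 < γ) :
    γ > (⨆ ω : ℝ, ‖Gc ω‖) ↔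
      γ > ‖D‖ ∧
        ∀ ω : ℝ, (γ ^ 2 • (1 : Matrix (Fin v) (Fin v) ℂ) - (Gc ω)ᴴ * Gc ω).det ≠ 0 := by
  have hcont : Continuous fun ω => ‖Gc ω‖ := by
    refine Continuous.norm (continuous_matrix fun j k => ?_)
    simpa only [hGc] using continuous_aeval_ofReal_mul_I_div (p := (G j k).num) (hpoles j k)
  have hlim : Tendsto (fun ω => ‖Gc ω‖) (cocompact ℝ) (𝓝 ‖D‖) := by
    rw [cocompact_eq_atBot_atTop]
    exact (hDbot.sup hDtop).norm
  have hle : ∀ ω, ‖Gc ω‖ ≤ ⨆ ω, ‖Gc ω‖ := le_ciSup hbdd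
  constructor
  · intro hsup
    refine ⟨(le_of_tendsto' hDtop.norm hle).trans_lt hsup, fun ω hdet => ?_⟩
    exact ((le_l2_opNorm_of_det_eq_zero _ hdet).trans (hle ω)).not_gt hsup
  · rintro ⟨hD, hdet⟩
    have hne : ∀ ω, ‖Gc ω‖ ≠ γ := fun ω h => hdet ω <| by
      rw [← h]
      exact det_l2_opNorm_sq_sub_eq_zero _ (norm_pos_iff.mp (h ▸ hγ))
    obtain ⟨ω₀, hω₀⟩ := (hDtop.norm.eventually (gt_mem_nhds hD)).exists
    exact hcont.ciSup_lt_of_tendsto_cocompact hlim hD (hcont.forall_lt_of_forall_ne hne hω₀)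

/-- Let `G` be a `u × v` matrix of proper real rational functions with no poles
on the imaginary axis, `Gc ω` its entrywise evaluation at `iω`, with `{‖Gc ω‖}` bounded above,
and let `D` be the common limit of `Gc ω` as `ω → ±∞`.  Then for every real `γ > 0`:
`γ > sup_ω ‖Gc ω‖` iff `γ > ‖D‖` and `det (γ² • 1 − (Gc ω)ᴴ * Gc ω) ≠ 0` for all `ω ∈ ℝ`. -/
theorem stmt4 (u v : ℕ) (G : Matrix (Fin u) (Fin v) (RatFunc ℝ))
    (hproper : ∀ j k, (G j k).num.degree ≤ (G j k).denom.degree)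
    (hpoles : ∀ j k, ∀ ω : ℝ, (Polynomial.aeval ((ω : ℂ) * Complex.I)) (G j k).denom ≠ 0)
    (Gc : ℝ → Matrix (Fin u) (Fin v) ℂ)
    (hGc : ∀ ω j k, Gc ω j k =
        (Polynomial.aeval ((ω : ℂ) * Complex.I)) (G j k).num /
        (Polynomial.aeval ((ω : ℂ) * Complex.I)) (G j k).denom)
    (hbdd : BddAbove (Set.range fun ω : ℝ => ‖Gc ω‖))
    (D : Matrix (Fin u) (Fin v) ℂ)
    (hDtop : Filter.Tendsto Gc Filter.atTop (nhds D))
    (hDbot : Filter.Tendsto Gc Filter.atBot (nhds D))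
    (γ : ℝ) (hγ : 0 < γ) :
    γ > (⨆ ω : ℝ, ‖Gc ω‖) ↔
      γ > ‖D‖ ∧
        ∀ ω : ℝ, (γ ^ 2 • (1 : Matrix (Fin v) (Fin v) ℂ) - (Gc ω)ᴴ * Gc ω).det ≠ 0 :=
  stmt4_general u v G hpoles Gc hGc hbdd D hDtop hDbot γ hγ
end

section
/- Let G be a u×v matrix whose entries are proper rational functions in RatFunc ℝ with no poles on the imaginary axis, and let Gc : ℝ → (u×v complex matrices) be defined by entrywise evaluation at iω. Then the function ω ↦ ‖Gc(ω)‖ is bounded on ℝ; that is, there exists B ∈ ℝ such that ‖Gc(ω)‖ ≤ B for all ω ∈ ℝ. -/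
/-!
Each entry `p(iω)/q(iω)` is continuous in `ω`, since `q` has no zeros on the imaginary axis, and
is bounded for large `|ω|`, since `deg p ≤ deg q` makes `p = O(q)` at infinity; so it is bounded
on `ℝ`. The L2 operator norm of a matrix is at most the sum of the moduli of its entries, by the
triangle inequality over its decomposition into matrix units.
-/

open Matrix Polynomial Filter Bornology
open scoped Matrix.Norms.L2Operator

namespace Matrix

variable {𝕜 : Type*} [RCLike 𝕜] {m n : Type*} [Fintype m] [Fintype n] [DecidableEq m] [DecidableEq n]

lemma l2_opNorm_single_le (i : m) (j : n) (c : 𝕜) : ‖single i j c‖ ≤ ‖c‖ := by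
  rw [l2_opNorm_def]
  refine ContinuousLinearMap.opNorm_le_bound _ (norm_nonneg c) fun x => ?_
  calc ‖WithLp.toLp 2 (single i j c *ᵥ x.ofLp)‖
      = ‖c * x j‖ := by
        rw [single_mulVec]
        exact PiLp.norm_single 2 (fun _ => 𝕜) i (c * x j)
    _ ≤ ‖c‖ * ‖x‖ := by
        rw [norm_mul]
        exact mul_le_mul_of_nonneg_left (PiLp.norm_apply_le x j) (norm_nonneg c)

lemma l2_opNorm_le_sum_norm_s7 (A : Matrix m n 𝕜) : ‖A‖ ≤ ∑ i, ∑ j, ‖A i j‖ := by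
  conv_lhs => rw [matrix_eq_sum_single A]
  refine (norm_sum_le _ _).trans (Finset.sum_le_sum fun i _ => ?_)
  exact (norm_sum_le _ _).trans (Finset.sum_le_sum fun j _ => l2_opNorm_single_le i j (A i j))

end Matrix

lemma Continuous.exists_forall_le_of_eventually_le_cocompact {X : Type*} [TopologicalSpace X]
    {f : X → ℝ} (hf : Continuous f) {C : ℝ} (hC : ∀ᶠ x in cocompact X, f x ≤ C) :
    ∃ B, ∀ x, f x ≤ B := by
  obtain ⟨K, hK, hKC⟩ := mem_cocompact.mp hC
  obtain ⟨B, hB⟩ := hK.exists_bound_of_continuousOn hf.continuousOn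
  refine ⟨max B C, fun x => ?_⟩
  by_cases hx : x ∈ K
  · exact le_max_of_le_left ((Real.le_norm_self _).trans (hB x hx))
  · exact le_max_of_le_right (hKC hx)

lemma tendsto_ofReal_mul_I_cocompact :
    Tendsto (fun ω : ℝ => (ω : ℂ) * Complex.I) (cocompact ℝ) (cobounded ℂ) := by
  rw [← tendsto_norm_atTop_iff_cobounded]
  simp only [norm_mul, Complex.norm_real, Complex.norm_I, mul_one]
  exact tendsto_norm_cocompact_atTop

namespace Polynomial

lemma exists_norm_div_le_cobounded {R : Type*} [NormedField R] {P Q : R[X]}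
    (h : P.degree ≤ Q.degree) :
    ∃ C, ∀ᶠ z in cobounded R, ‖P.eval z / Q.eval z‖ ≤ C := by
  obtain ⟨C, hC⟩ := (isBigO_cobounded_of_degree_le h).bound
  refine ⟨max C 0, hC.mono fun z hz => ?_⟩
  rw [norm_div]
  rcases eq_or_ne (Q.eval z) 0 with hQ | hQ
  · simp [hQ]
  · exact div_le_of_le_mul₀ (norm_nonneg _) (le_max_right _ _)
      (hz.trans (mul_le_mul_of_nonneg_right (le_max_left _ _) (norm_nonneg _)))

lemma exists_norm_aeval_div_le_on_imaginaryAxis {p q : ℝ[X]} (hdeg : p.degree ≤ q.degree)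
    (hq : ∀ ω : ℝ, aeval ((ω : ℂ) * Complex.I) q ≠ 0) :
    ∃ C, ∀ ω : ℝ, ‖aeval ((ω : ℂ) * Complex.I) p / aeval ((ω : ℂ) * Complex.I) q‖ ≤ C := by
  obtain ⟨C, hC⟩ := exists_norm_div_le_cobounded (P := p.map (algebraMap ℝ ℂ))
    (Q := q.map (algebraMap ℝ ℂ)) (by rwa [degree_map, degree_map])
  have hI : Continuous fun ω : ℝ => (ω : ℂ) * Complex.I := by fun_prop
  have hcont : Continuous fun ω : ℝ =>
      ‖aeval ((ω : ℂ) * Complex.I) p / aeval ((ω : ℂ) * Complex.I) q‖ :=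
    ((p.continuous_aeval.comp hI).div (q.continuous_aeval.comp hI) hq).norm
  refine hcont.exists_forall_le_of_eventually_le_cocompact (C := C) ?_
  simpa only [eval_map_algebraMap] using tendsto_ofReal_mul_I_cocompact.eventually hC

end Polynomial

/-- Let `G` be a `u × v` matrix of proper real rational functions with no poles
on the imaginary axis, and let `Gc ω` be its entrywise evaluation at `iω`.  Then the function
`ω ↦ ‖Gc ω‖` (L2 operator norm) is bounded on `ℝ`. -/
theorem stmt7 (u v : ℕ) (G : Matrix (Fin u) (Fin v) (RatFunc ℝ))
    (hproper : ∀ j k, (G j k).num.degree ≤ (G j k).denom.degree)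
    (hpoles : ∀ j k, ∀ ω : ℝ, (Polynomial.aeval ((ω : ℂ) * Complex.I)) (G j k).denom ≠ 0)
    (Gc : ℝ → Matrix (Fin u) (Fin v) ℂ)
    (hGc : ∀ ω j k, Gc ω j k =
        (Polynomial.aeval ((ω : ℂ) * Complex.I)) (G j k).num /
        (Polynomial.aeval ((ω : ℂ) * Complex.I)) (G j k).denom) :
    ∃ B : ℝ, ∀ ω : ℝ, ‖Gc ω‖ ≤ B := by
  choose C hC using fun j k =>
    exists_norm_aeval_div_le_on_imaginaryAxis (hproper j k) (hpoles j k)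
  refine ⟨∑ j, ∑ k, C j k, fun ω => (l2_opNorm_le_sum_norm_s7 (Gc ω)).trans ?_⟩
  gcongr with j _ k _
  exact hGc ω j k ▸ hC j k ω
end

section
/- Let n be a nonzero bivariate real polynomial in (x, y), viewed as an element of (ℝ[y])[x] with positive degree in x. Suppose the set S := {y ∈ ℝ | ∃ x ∈ ℝ, n(x, y) = 0} is nonempty and bounded above, and let y* := sup S. Then either there exists x* ∈ ℝ with n(x*, y*) = 0 and (∂n/∂x)(x*, y*) = 0, or Lc_x(n)(y*) = 0. -/
/-!
If `Lc_x(n)(y*) ≠ 0`, Cauchy's bound keeps the real roots of `n(·, y)` uniformly bounded for `y`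
near `y*`; by compactness the set `S` is then closed near `y*`, so `y*` itself carries a root
`x*`. If `x*` were a simple root, `n(·, y*)` would change sign around it, and by continuity so
would `n(·, y)` for every `y` near `y*`, giving roots at heights above `y* = sup S`.
-/

open Polynomial Filter Topology NNReal

namespace Polynomial

-- `p.evalEval y x` evaluates the coefficients at `y` and the outer variable at `x`, i.e. `p(x, y)`.

theorem continuous_evalEval {R : Type*} [CommSemiring R] [TopologicalSpace R]
    [IsTopologicalSemiring R] (p : R[X][X]) :
    Continuous fun z : R × R => p.evalEval z.1 z.2 := by
  induction p using Polynomial.induction_on' with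
  | add p q hp hq =>
    simp only [evalEval_add]
    exact hp.add hq
  | monomial k a =>
    simp only [evalEval, eval_monomial, eval_mul, eval_pow, eval_C]
    fun_prop

theorem exists_eventually_norm_le_of_evalEval_eq_zero {K : Type*} [NormedField K]
    (n : K[X][X]) {y₀ : K} (h : n.leadingCoeff.eval y₀ ≠ 0) :
    ∃ B : ℝ, ∀ᶠ y in 𝓝 y₀, ∀ x, n.evalEval y x = 0 → ‖x‖ ≤ B := by
  -- `b y` is the Cauchy bound of `n(·, y)` wherever `Lc_x(n)(y) ≠ 0`
  set b : K → ℝ≥0 := fun y => (Finset.range n.natDegree).sup (fun i => ‖(n.coeff i).eval y‖₊) /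
    ‖n.leadingCoeff.eval y‖₊ + 1
  have hb : ContinuousAt b y₀ := by
    refine ((ContinuousAt.finset_sup_apply fun i _ => ?_).div ?_ ?_).add continuousAt_const
    · exact (n.coeff i).continuous.nnnorm.continuousAt
    · exact n.leadingCoeff.continuous.nnnorm.continuousAt
    · simpa using h
  have hL : ∀ᶠ y in 𝓝 y₀, n.leadingCoeff.eval y ≠ 0 :=
    n.leadingCoeff.continuous.continuousAt.eventually_ne h
  refine ⟨b y₀ + 1, (hL.and (hb.eventually (gt_mem_nhds (lt_add_one _)))).mono
    fun y ⟨hy, hby⟩ x hx => ?_⟩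
  have hy' : evalRingHom y n.leadingCoeff ≠ 0 := hy
  have hcb : cauchyBound (n.map (evalRingHom y)) = b y := by
    simp [b, cauchyBound, natDegree_map_of_leadingCoeff_ne_zero _ hy',
      leadingCoeff_map_of_leadingCoeff_ne_zero _ hy']
  have hroot := IsRoot.norm_lt_cauchyBound (p := n.map (evalRingHom y))
    (fun h0 => hy' <| by
      rw [← leadingCoeff_map_of_leadingCoeff_ne_zero _ hy', h0, leadingCoeff_zero])
    (by rwa [IsRoot, map_evalRingHom_eval])
  rw [hcb] at hroot
  exact_mod_cast (hroot.trans hby).le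

theorem exists_evalEval_eq_zero_of_mem_closure {K : Type*} [NormedField K] [ProperSpace K]
    (n : K[X][X]) {y₀ : K} (h : n.leadingCoeff.eval y₀ ≠ 0)
    (hy₀ : y₀ ∈ closure {y | ∃ x, n.evalEval y x = 0}) :
    ∃ x, n.evalEval y₀ x = 0 := by
  obtain ⟨B, hB⟩ := exists_eventually_norm_le_of_evalEval_eq_zero n h
  obtain ⟨U, hUB, hU, hy₀U⟩ := mem_nhds_iff.mp hB
  have : CompactSpace (Metric.closedBall (0 : K) B) :=
    isCompact_iff_compactSpace.mp (isCompact_closedBall 0 B)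
  set Z := {z : Metric.closedBall (0 : K) B × K | n.evalEval z.2 z.1 = 0}
  have hT : IsClosed (Prod.snd '' Z) :=
    isClosedMap_snd_of_compactSpace _ <| isClosed_eq ((continuous_evalEval n).comp
      (continuous_snd.prodMk (continuous_subtype_val.comp continuous_fst))) continuous_const
  have hsub : U ∩ {y | ∃ x, n.evalEval y x = 0} ⊆ Prod.snd '' Z :=
    fun y ⟨hyU, x, hx⟩ => ⟨(⟨x, by simpa using hUB hyU x hx⟩, y), hx, rfl⟩
  obtain ⟨⟨x, y⟩, hx, rfl⟩ := hT.closure_subset_iff.mpr hsub (hU.inter_closure ⟨hy₀U, hy₀⟩)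
  exact ⟨x, hx⟩

theorem exists_isRoot_of_eval_mul_eval_neg {p : ℝ[X]} {u v : ℝ} (h : p.eval u * p.eval v < 0) :
    ∃ x, p.IsRoot x := by
  have h0 : (0 : ℝ) ∈ Set.uIcc (p.eval u) (p.eval v) := by
    rcases mul_neg_iff.mp h with h | h
    · exact Set.mem_uIcc.mpr (Or.inr ⟨h.2.le, h.1.le⟩)
    · exact Set.mem_uIcc.mpr (Or.inl ⟨h.1.le, h.2.le⟩)
  obtain ⟨x, -, hx⟩ := intermediate_value_uIcc p.continuous.continuousOn h0
  exact ⟨x, hx⟩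

theorem exists_eval_mul_eval_neg_of_derivative_ne_zero {p : ℝ[X]} {a : ℝ} (hroot : p.IsRoot a)
    (hder : p.derivative.eval a ≠ 0) : ∃ u v, p.eval u * p.eval v < 0 := by
  -- `p = (X - a) q` with `q(a) = p'(a) ≠ 0`, and `p(a + δ) p(a - δ) = -δ² q(a + δ) q(a - δ)`
  obtain ⟨q, rfl⟩ := dvd_iff_isRoot.mpr hroot
  have hqa : q.eval a ≠ 0 := by simpa using hder
  have hq : Tendsto (fun δ => q.eval (a + δ) * q.eval (a - δ)) (𝓝[≠] 0)
      (𝓝 (q.eval a * q.eval a)) := by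
    refine Tendsto.mono_left ?_ nhdsWithin_le_nhds
    have : Continuous fun δ => q.eval (a + δ) * q.eval (a - δ) := by fun_prop
    simpa using this.tendsto 0
  obtain ⟨δ, hpos, hδ⟩ :=
    ((hq.eventually (lt_mem_nhds (mul_self_pos.mpr hqa))).and self_mem_nhdsWithin).exists
  refine ⟨a + δ, a - δ, ?_⟩
  simp only [eval_mul, eval_sub, eval_X, eval_C, add_sub_cancel_left, sub_sub_cancel_left]
  nlinarith [mul_self_pos.mpr (show δ ≠ 0 from hδ)]

theorem setOf_exists_evalEval_eq_zero_mem_nhds (n : ℝ[X][X]) {x₀ y₀ : ℝ}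
    (hroot : n.evalEval y₀ x₀ = 0) (hder : n.derivative.evalEval y₀ x₀ ≠ 0) :
    {y | ∃ x, n.evalEval y x = 0} ∈ 𝓝 y₀ := by
  obtain ⟨u, v, huv⟩ := exists_eval_mul_eval_neg_of_derivative_ne_zero
    (p := n.map (evalRingHom y₀)) (a := x₀) (by rwa [IsRoot, map_evalRingHom_eval])
    (by rwa [derivative_map, map_evalRingHom_eval])
  rw [map_evalRingHom_eval, map_evalRingHom_eval] at huv
  have hcont : Continuous fun y => n.evalEval y u * n.evalEval y v :=
    ((continuous_evalEval n).comp (continuous_id.prodMk continuous_const)).mul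
      ((continuous_evalEval n).comp (continuous_id.prodMk continuous_const))
  filter_upwards [hcont.continuousAt.eventually (gt_mem_nhds huv)] with y hy
  obtain ⟨x, hx⟩ := exists_isRoot_of_eval_mul_eval_neg (p := n.map (evalRingHom y))
    (u := u) (v := v) (by rwa [map_evalRingHom_eval, map_evalRingHom_eval])
  exact ⟨x, by rwa [IsRoot, map_evalRingHom_eval] at hx⟩

end Polynomial

theorem stmt9_general (n : Polynomial (Polynomial ℝ))
    (hne : {y : ℝ | ∃ x : ℝ, (n.eval (Polynomial.C x)).eval y = 0}.Nonempty)
    (hbdd : BddAbove {y : ℝ | ∃ x : ℝ, (n.eval (Polynomial.C x)).eval y = 0}) :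
    (∃ xstar : ℝ,
        (n.eval (Polynomial.C xstar)).eval
            (sSup {y : ℝ | ∃ x : ℝ, (n.eval (Polynomial.C x)).eval y = 0}) = 0 ∧
        (((Polynomial.derivative n).eval (Polynomial.C xstar)).eval
            (sSup {y : ℝ | ∃ x : ℝ, (n.eval (Polynomial.C x)).eval y = 0})) = 0) ∨
      n.leadingCoeff.eval
          (sSup {y : ℝ | ∃ x : ℝ, (n.eval (Polynomial.C x)).eval y = 0}) = 0 := by
  set S := {y : ℝ | ∃ x : ℝ, (n.eval (Polynomial.C x)).eval y = 0}
  refine or_iff_not_imp_right.mpr fun hL => ?_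
  obtain ⟨x₀, hx₀⟩ :=
    exists_evalEval_eq_zero_of_mem_closure n hL (csSup_mem_closure hne hbdd)
  refine ⟨x₀, hx₀, by_contra fun hder => ?_⟩
  obtain ⟨y, hyS, hy⟩ := Filter.nonempty_of_mem <| inter_mem
    (mem_nhdsWithin_of_mem_nhds (setOf_exists_evalEval_eq_zero_mem_nhds n hx₀ hder))
    (self_mem_nhdsWithin : Set.Ioi (sSup S) ∈ 𝓝[>] sSup S)
  exact (le_csSup hbdd hyS).not_gt hy

/-- Let `n ∈ (ℝ[y])[x]` be nonzero with positive degree in `x`.  If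
`S = {y | ∃ x, n(x,y) = 0}` is nonempty and bounded above with supremum `y*`, then either
there is `x*` with `n(x*,y*) = 0` and `(∂n/∂x)(x*,y*) = 0`, or `Lc_x(n)(y*) = 0`. -/
theorem stmt9 (n : Polynomial (Polynomial ℝ)) (hn0 : n ≠ 0) (hdeg : 0 < n.natDegree)
    (hne : {y : ℝ | ∃ x : ℝ, (n.eval (Polynomial.C x)).eval y = 0}.Nonempty)
    (hbdd : BddAbove {y : ℝ | ∃ x : ℝ, (n.eval (Polynomial.C x)).eval y = 0}) :
    (∃ xstar : ℝ,
        (n.eval (Polynomial.C xstar)).eval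
            (sSup {y : ℝ | ∃ x : ℝ, (n.eval (Polynomial.C x)).eval y = 0}) = 0 ∧
        (((Polynomial.derivative n).eval (Polynomial.C xstar)).eval
            (sSup {y : ℝ | ∃ x : ℝ, (n.eval (Polynomial.C x)).eval y = 0})) = 0) ∨
      n.leadingCoeff.eval
          (sSup {y : ℝ | ∃ x : ℝ, (n.eval (Polynomial.C x)).eval y = 0}) = 0 :=
  stmt9_general n hne hbdd
end

section
/- Let A, B, C, D be real matrices of sizes n×n, n×m, p×n, p×m respectively, assume that for every ω ∈ ℝ, iω is not in the complex spectrum of A, and let γ > ‖D‖ with γ > 0. Set R := γ² • 1_m − Dᵀ D (which is positive definite since ‖D‖ < γ) and define the real 2n × 2n block matrix H_γ := [[A + B R⁻¹ Dᵀ C, B R⁻¹ Bᵀ], [−Cᵀ (1_p + D R⁻¹ Dᵀ) C, −(A + B R⁻¹ Dᵀ C)ᵀ]]. For ω ∈ ℝ let G(iω) := Cℂ (iω • 1_n − Aℂ)⁻¹ Bℂ + Dℂ (subscript ℂ denoting entrywise coercion to ℂ). Then for every ω ∈ ℝ: det(γ² • 1_m − G(iω)ᴴ · G(iω)) = 0 if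 and only if iω is in the complex spectrum of H_γ. -/
open Matrix
open scoped Matrix.Norms.L2Operator

/-!
Put `s = iω`, `X = s • 1 - A` and `Y = s • 1 + Aᵀ`. Then `s • 1 - H_γ` is the block lower-triangular
`S = [[X, 0], [CᵀC, Y]]` plus the low-rank correction `U R⁻¹ V` with `U = [B; -CᵀD]` and
`V = [-DᵀC, -Bᵀ]`, so the Weinstein–Aronszajn identity gives
`det (s • 1 - H_γ) * det R = det X * det Y * det (R + V S⁻¹ U)`. The Schur complement
`R + V S⁻¹ U` is `γ² • 1 - G(-s)ᵀ G(s)`, and `G(-s)ᵀ = G(s)ᴴ` on the imaginary axis because the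
data are real. `X` and `Y` are invertible since `A` has no imaginary eigenvalue, and `R` is
invertible since `‖DᵀD‖ = ‖D‖² < γ²`.
-/

namespace Matrix

section CommRing

variable {α : Type*} [CommRing α] {m n p : Type*}

theorem map_nonsing_inv [Fintype m] [DecidableEq m] {β : Type*} [CommRing β] (f : α →+* β)
    {A : Matrix m m α} (hA : IsUnit A.det) : A⁻¹.map f = (A.map f)⁻¹ :=
  (inv_eq_right_inv <| by
    rw [← Matrix.map_mul, mul_nonsing_inv A hA]; exact f.mapMatrix.map_one).symm

theorem nonsing_inv_neg [Fintype m] [DecidableEq m] (A : Matrix m m α) : (-A)⁻¹ = -A⁻¹ := by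
  by_cases hA : IsUnit A.det
  · exact inv_eq_left_inv (by rw [neg_mul_neg, nonsing_inv_mul A hA])
  · have hA' : ¬IsUnit (-A).det := by
      rwa [← isUnit_iff_isUnit_det, IsUnit.neg_iff, isUnit_iff_isUnit_det]
    rw [nonsing_inv_apply_not_isUnit _ hA, nonsing_inv_apply_not_isUnit _ hA', neg_zero]

theorem mem_spectrum_iff_not_isUnit_det [Fintype m] [DecidableEq m] (M : Matrix m m α) (s : α) :
    s ∈ spectrum α M ↔ ¬IsUnit (s • 1 - M).det := by
  rw [spectrum.mem_iff, isUnit_iff_isUnit_det, Algebra.algebraMap_eq_smul_one]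

theorem transpose_neg_smul_one_sub [DecidableEq m] (A : Matrix m m α) (s : α) :
    ((-s) • 1 - A)ᵀ = -(s • 1 + Aᵀ) := by
  rw [transpose_sub, transpose_smul, transpose_one, neg_smul, neg_add']

theorem det_add_mul_nonsing_inv_mul [Fintype m] [DecidableEq m] [Fintype n] [DecidableEq n]
    {S : Matrix n n α} {R : Matrix m m α} (U : Matrix n m α) (V : Matrix m n α) (hS : IsUnit S.det)
    (hR : IsUnit R.det) :
    (S + U * R⁻¹ * V).det * R.det = S.det * (R + V * S⁻¹ * U).det := by
  have h : 1 + R⁻¹ * V * S⁻¹ * U = R⁻¹ * (R + V * S⁻¹ * U) := by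
    rw [Matrix.mul_add, nonsing_inv_mul R hR]; simp only [Matrix.mul_assoc]
  rw [Matrix.mul_assoc, det_add_mul _ _ hS, h, det_mul]
  linear_combination (S.det * (R + V * S⁻¹ * U).det) * det_nonsing_inv_mul_det R hR

variable (A : Matrix n n α) (B : Matrix n m α) (C : Matrix p n α) (D : Matrix p m α)

section Transfer

variable [Fintype n] [DecidableEq n]

noncomputable def transferMatrix (s : α) : Matrix p m α := C * (s • 1 - A)⁻¹ * B + D

theorem fromCols_mul_inv_mul_fromRows_eq_sub_transferMatrix [Fintype p] {s : α}
    (hX : IsUnit (s • 1 - A).det) (hY : IsUnit (s • 1 + Aᵀ).det) :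
    fromCols (-(Dᵀ * C)) (-Bᵀ) * (fromBlocks (s • 1 - A) 0 (Cᵀ * C) (s • 1 + Aᵀ))⁻¹ *
        fromRows B (-(Cᵀ * D)) =
      Dᵀ * D - (transferMatrix A B C D (-s))ᵀ * transferMatrix A B C D s := by
  rw [inv_fromBlocks_zero₁₂_of_isUnit_iff _ _ _ (by simp [isUnit_iff_isUnit_det, hX, hY]),
    fromCols_mul_fromBlocks, fromCols_mul_fromRows, transferMatrix, transferMatrix]
  simp only [transpose_add, transpose_mul, transpose_nonsing_inv, transpose_neg_smul_one_sub,
    nonsing_inv_neg, Matrix.mul_add, Matrix.add_mul, Matrix.mul_neg, Matrix.neg_mul,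
    Matrix.mul_zero, Matrix.mul_assoc, neg_neg, zero_add]
  abel

end Transfer

variable [Fintype m] [DecidableEq m] [Fintype p] [DecidableEq p]

noncomputable def hamiltonian (R : Matrix m m α) : Matrix (n ⊕ n) (n ⊕ n) α :=
  fromBlocks (A + B * R⁻¹ * Dᵀ * C) (B * R⁻¹ * Bᵀ)
    (-(Cᵀ * (1 + D * R⁻¹ * Dᵀ) * C)) (-(A + B * R⁻¹ * Dᵀ * C)ᵀ)

theorem hamiltonian_map {β : Type*} [CommRing β] (f : α →+* β) {R : Matrix m m α}
    (hR : IsUnit R.det) :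
    (hamiltonian A B C D R).map f =
      hamiltonian (A.map f) (B.map f) (C.map f) (D.map f) (R.map f) := by
  simp [hamiltonian, fromBlocks_map, Matrix.map_mul, Matrix.map_add, Matrix.map_neg,
    transpose_map, Matrix.map_one, ← map_nonsing_inv f hR]

theorem smul_one_sub_hamiltonian [DecidableEq n] {R : Matrix m m α} (hRT : Rᵀ = R) (s : α) :
    s • 1 - hamiltonian A B C D R =
      fromBlocks (s • 1 - A) 0 (Cᵀ * C) (s • 1 + Aᵀ) +
        fromRows B (-(Cᵀ * D)) * R⁻¹ * fromCols (-(Dᵀ * C)) (-Bᵀ) := by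
  have hRinvT : R⁻¹ᵀ = R⁻¹ := by rw [transpose_nonsing_inv, hRT]
  rw [hamiltonian, fromRows_mul, fromRows_mul_fromCols, ← fromBlocks_one, fromBlocks_smul,
    fromBlocks_add, sub_eq_add_neg, fromBlocks_neg, fromBlocks_add]
  congr 1 <;>
    simp only [transpose_add, transpose_mul, hRinvT, Matrix.mul_add, Matrix.add_mul,
      Matrix.mul_neg, Matrix.neg_mul, Matrix.mul_one, Matrix.mul_assoc, neg_neg, smul_zero] <;>
    abel

variable [Fintype n] [DecidableEq n]

theorem det_smul_one_sub_hamiltonian_mul_det {R : Matrix m m α} (hR : IsUnit R.det)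
    (hRT : Rᵀ = R) {s : α} (hX : IsUnit (s • 1 - A).det) (hY : IsUnit (s • 1 + Aᵀ).det) :
    (s • 1 - hamiltonian A B C D R).det * R.det =
      (s • 1 - A).det * (s • 1 + Aᵀ).det *
        (R + Dᵀ * D - (transferMatrix A B C D (-s))ᵀ * transferMatrix A B C D s).det := by
  have hS : IsUnit (fromBlocks (s • 1 - A) 0 (Cᵀ * C) (s • 1 + Aᵀ)).det := by
    rw [det_fromBlocks_zero₁₂]; exact hX.mul hY
  rw [smul_one_sub_hamiltonian A B C D hRT, det_add_mul_nonsing_inv_mul _ _ hS hR,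
    fromCols_mul_inv_mul_fromRows_eq_sub_transferMatrix A B C D hX hY, det_fromBlocks_zero₁₂,
    add_sub_assoc]

theorem isUnit_det_smul_one_sub_hamiltonian_iff {R : Matrix m m α} (hR : IsUnit R.det)
    (hRT : Rᵀ = R) {s : α} (hX : IsUnit (s • 1 - A).det) (hZ : IsUnit ((-s) • 1 - A).det) :
    IsUnit (s • 1 - hamiltonian A B C D R).det ↔
      IsUnit (R + Dᵀ * D - (transferMatrix A B C D (-s))ᵀ * transferMatrix A B C D s).det := by
  have hY : IsUnit (s • 1 + Aᵀ).det := by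
    rwa [← isUnit_iff_isUnit_det, ← IsUnit.neg_iff, ← transpose_neg_smul_one_sub,
      isUnit_transpose, isUnit_iff_isUnit_det]
  have h := congrArg IsUnit (det_smul_one_sub_hamiltonian_mul_det A B C D hR hRT hX hY)
  exact Iff.of_eq (by simpa only [IsUnit.mul_iff, hR, hX, hY, and_true, true_and] using h)

end CommRing

theorem isUnit_smul_one_sub_conjTranspose_mul {𝕜 : Type*} [RCLike 𝕜] {m p : Type*} [Fintype m]
    [Fintype p] [DecidableEq m] (D : Matrix p m 𝕜) {c : 𝕜} (h : ‖D‖ * ‖D‖ < ‖c‖) :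
    IsUnit (c • 1 - Dᴴ * D) := by
  cases isEmpty_or_nonempty m
  · exact isUnit_of_subsingleton _
  · rw [← l2_opNorm_conjTranspose_mul_self] at h
    simpa [Algebra.algebraMap_eq_smul_one] using
      spectrum.mem_resolventSet_iff.mp (spectrum.mem_resolventSet_of_norm_lt h)

section Complex

variable {m n p : Type*}

theorem conjTranspose_map_ofReal (M : Matrix m n ℝ) :
    (M.map (algebraMap ℝ ℂ))ᴴ = (M.map (algebraMap ℝ ℂ))ᵀ := by
  ext i j
  simp [conjTranspose_apply]

theorem conjTranspose_transferMatrix_map_ofReal [Fintype n] [DecidableEq n]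
    (A : Matrix n n ℝ) (B : Matrix n m ℝ) (C : Matrix p n ℝ) (D : Matrix p m ℝ) (s : ℂ) :
    (transferMatrix (A.map (algebraMap ℝ ℂ)) (B.map (algebraMap ℝ ℂ))
        (C.map (algebraMap ℝ ℂ)) (D.map (algebraMap ℝ ℂ)) s)ᴴ =
      (transferMatrix (A.map (algebraMap ℝ ℂ)) (B.map (algebraMap ℝ ℂ))
        (C.map (algebraMap ℝ ℂ)) (D.map (algebraMap ℝ ℂ)) (star s))ᵀ := by
  simp only [transferMatrix, conjTranspose_add, conjTranspose_mul, conjTranspose_nonsing_inv,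
    conjTranspose_sub, conjTranspose_smul, conjTranspose_one, conjTranspose_map_ofReal,
    transpose_add, transpose_mul, transpose_nonsing_inv, transpose_sub, transpose_smul,
    transpose_one]

end Complex

end Matrix

theorem stmt13_general (n m p : ℕ)
    (A : Matrix (Fin n) (Fin n) ℝ) (B : Matrix (Fin n) (Fin m) ℝ)
    (C : Matrix (Fin p) (Fin n) ℝ) (D : Matrix (Fin p) (Fin m) ℝ)
    (hA : ∀ ω : ℝ, ((ω : ℂ) * Complex.I) ∉ spectrum ℂ (A.map (algebraMap ℝ ℂ)))
    (γ : ℝ) (hγD : ‖D‖ < γ)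
    (R : Matrix (Fin m) (Fin m) ℝ)
    (hR : R = γ ^ 2 • (1 : Matrix (Fin m) (Fin m) ℝ) - Dᵀ * D)
    (Hγ : Matrix (Fin n ⊕ Fin n) (Fin n ⊕ Fin n) ℝ)
    (hH : Hγ = Matrix.fromBlocks
        (A + B * R⁻¹ * Dᵀ * C) (B * R⁻¹ * Bᵀ)
        (-(Cᵀ * ((1 : Matrix (Fin p) (Fin p) ℝ) + D * R⁻¹ * Dᵀ) * C))
        (-(A + B * R⁻¹ * Dᵀ * C)ᵀ))
    (Gc : ℝ → Matrix (Fin p) (Fin m) ℂ)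
    (hGc : ∀ ω : ℝ, Gc ω =
        C.map (algebraMap ℝ ℂ) *
          (((ω : ℂ) * Complex.I) • (1 : Matrix (Fin n) (Fin n) ℂ) - A.map (algebraMap ℝ ℂ))⁻¹ *
          B.map (algebraMap ℝ ℂ) + D.map (algebraMap ℝ ℂ)) :
    ∀ ω : ℝ,
      (γ ^ 2 • (1 : Matrix (Fin m) (Fin m) ℂ) - (Gc ω)ᴴ * Gc ω).det = 0 ↔
        ((ω : ℂ) * Complex.I) ∈ spectrum ℂ (Hγ.map (algebraMap ℝ ℂ)) := by
  intro ω
  have hRT : Rᵀ = R := by simp [hR, transpose_sub]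
  have hRu : IsUnit R.det := by
    have hDγ : ‖D‖ * ‖D‖ < ‖γ ^ 2‖ := by
      rw [Real.norm_of_nonneg (sq_nonneg γ), sq]
      exact mul_self_lt_mul_self (norm_nonneg D) hγD
    rw [← isUnit_iff_isUnit_det, hR, ← conjTranspose_eq_transpose_of_trivial]
    exact isUnit_smul_one_sub_conjTranspose_mul D hDγ
  have hRcu : IsUnit (R.map (algebraMap ℝ ℂ)).det :=
    RingHom.map_det (algebraMap ℝ ℂ) R ▸ hRu.map _
  have hRcT : (R.map (algebraMap ℝ ℂ))ᵀ = R.map (algebraMap ℝ ℂ) := by rw [← transpose_map, hRT]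
  have hRc : R.map (algebraMap ℝ ℂ) + (D.map (algebraMap ℝ ℂ))ᵀ * D.map (algebraMap ℝ ℂ) =
      γ ^ 2 • (1 : Matrix (Fin m) (Fin m) ℂ) := by
    rw [hR, Matrix.map_sub (hf := map_sub _), Matrix.map_mul, transpose_map, sub_add_cancel]
    exact (map_smul (Algebra.ofId ℝ ℂ).mapMatrix (γ ^ 2) 1).trans (congrArg _ (map_one _))
  have hX : IsUnit (((ω : ℂ) * Complex.I) • 1 - A.map (algebraMap ℝ ℂ)).det := by
    simpa [mem_spectrum_iff_not_isUnit_det] using hA ω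
  have hZ : IsUnit ((-((ω : ℂ) * Complex.I)) • 1 - A.map (algebraMap ℝ ℂ)).det := by
    simpa [mem_spectrum_iff_not_isUnit_det] using hA (-ω)
  have hHam : Hγ = hamiltonian A B C D R := hH
  have hstar : star ((ω : ℂ) * Complex.I) = -((ω : ℂ) * Complex.I) := by simp
  rw [mem_spectrum_iff_not_isUnit_det, hHam, hamiltonian_map _ _ _ _ _ hRu,
    isUnit_det_smul_one_sub_hamiltonian_iff _ _ _ _ hRcu hRcT hX hZ, hRc, hGc,
    ← transferMatrix, conjTranspose_transferMatrix_map_ofReal, hstar, isUnit_iff_ne_zero, not_not]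

/-- Let `(A, B, C, D)` be a real state-space realization with `A` having no
purely imaginary eigenvalue, let `γ > ‖D‖` with `γ > 0`, `R := γ² • 1 − Dᵀ D`, `H_γ` the
associated Hamiltonian matrix, and `G(iω) := Cℂ (iω • 1 − Aℂ)⁻¹ Bℂ + Dℂ`.  Then for every
`ω ∈ ℝ`: `det (γ² • 1 − G(iω)ᴴ G(iω)) = 0` iff `iω` is in the complex spectrum of `H_γ`. -/
theorem stmt13 (n m p : ℕ)
    (A : Matrix (Fin n) (Fin n) ℝ) (B : Matrix (Fin n) (Fin m) ℝ)
    (C : Matrix (Fin p) (Fin n) ℝ) (D : Matrix (Fin p) (Fin m) ℝ)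
    (hA : ∀ ω : ℝ, ((ω : ℂ) * Complex.I) ∉ spectrum ℂ (A.map (algebraMap ℝ ℂ)))
    (γ : ℝ) (hγ : 0 < γ) (hγD : ‖D‖ < γ)
    (R : Matrix (Fin m) (Fin m) ℝ)
    (hR : R = γ ^ 2 • (1 : Matrix (Fin m) (Fin m) ℝ) - Dᵀ * D)
    (Hγ : Matrix (Fin n ⊕ Fin n) (Fin n ⊕ Fin n) ℝ)
    (hH : Hγ = Matrix.fromBlocks
        (A + B * R⁻¹ * Dᵀ * C) (B * R⁻¹ * Bᵀ)
        (-(Cᵀ * ((1 : Matrix (Fin p) (Fin p) ℝ) + D * R⁻¹ * Dᵀ) * C))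
        (-(A + B * R⁻¹ * Dᵀ * C)ᵀ))
    (Gc : ℝ → Matrix (Fin p) (Fin m) ℂ)
    (hGc : ∀ ω : ℝ, Gc ω =
        C.map (algebraMap ℝ ℂ) *
          (((ω : ℂ) * Complex.I) • (1 : Matrix (Fin n) (Fin n) ℂ) - A.map (algebraMap ℝ ℂ))⁻¹ *
          B.map (algebraMap ℝ ℂ) + D.map (algebraMap ℝ ℂ)) :
    ∀ ω : ℝ,
      (γ ^ 2 • (1 : Matrix (Fin m) (Fin m) ℂ) - (Gc ω)ᴴ * Gc ω).det = 0 ↔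
        ((ω : ℂ) * Complex.I) ∈ spectrum ℂ (Hγ.map (algebraMap ℝ ℂ)) :=
  stmt13_general n m p A B C D hA γ hγD R hR Hγ hH Gc hGc
end
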